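/- Assume the TIN-convexity condition (C1). Then for every subset S ⊆ 𝒦 and every decoding order π, P_π(S) ⊆ P_id(S); i.e., the identity (descending strength) decoding order dominates all other decoding orders for every subnetwork. -/

import Mathlib

open Finset

/-- The set of users `𝒦`: a cell `k : Fin K` together with a user index in `Fin (L k)`. -/
abbrev User {K : ℕ} (L : Fin K → ℕ) := (k : Fin K) × Fin (L k)

/-- The cyclically previous index in `Fin m` (i.e. `j - 1` modulo `m`). -/
def prevIdx {m : ℕ} (j : Fin m) : Fin m :=
  ⟨(j.val + (m - 1)) % m, Nat.mod_lt _ j.pos⟩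

/-- The cyclically next index in `Fin m` (i.e. `j + 1` modulo `m`). -/
def nextIdx {m : ℕ} (j : Fin m) : Fin m :=
  ⟨(j.val + 1) % m, Nat.mod_lt _ j.pos⟩

/-- The identity decoding order. -/
def idOrder {K : ℕ} (L : Fin K → ℕ) : (k : Fin K) → Equiv.Perm (Fin (L k)) :=
  fun _ => Equiv.refl _

/-- The term `max({0} ∪ {r_k^{[π_k(l')]} + α_{kk}^{[π_k(l')]} : l' < l, (π_k(l'),k) ∈ S}
∪ {r_j^{[l_j]} + α_{jk}^{[l_j]} : (l_j,j) ∈ S, j ≠ k})` in the polyhedral TIN constraints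
(expressed as a supremum of the corresponding finite nonempty set of reals). -/
noncomputable def innerMax {K : ℕ} (L : Fin K → ℕ)
    (α : (k : Fin K) → Fin (L k) → Fin K → ℝ)
    (π : (k : Fin K) → Equiv.Perm (Fin (L k)))
    (S : Set (User L)) (r : (k : Fin K) → Fin (L k) → ℝ)
    (k : Fin K) (l : Fin (L k)) : ℝ :=
  sSup (insert (0 : ℝ)
    ({x : ℝ | ∃ l' : Fin (L k), l' < l ∧ (⟨k, π k l'⟩ : User L) ∈ S ∧
        x = r k (π k l') + α k (π k l') k} ∪
     {x : ℝ | ∃ (j : Fin K) (lj : Fin (L j)), j ≠ k ∧ (⟨j, lj⟩ : User L) ∈ S ∧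
        x = r j lj + α j lj k}))

/-- The polyhedral TIN region `P_π(S)`: `d` is nonnegative, vanishes outside `S`, and is
realized by some power allocation `r ≤ 0` on `S`. -/
def polyTIN {K : ℕ} (L : Fin K → ℕ)
    (α : (k : Fin K) → Fin (L k) → Fin K → ℝ)
    (π : (k : Fin K) → Equiv.Perm (Fin (L k)))
    (S : Set (User L))
    (d : (k : Fin K) → Fin (L k) → ℝ) : Prop :=
  (∀ (k : Fin K) (l : Fin (L k)), 0 ≤ d k l) ∧
  (∀ (k : Fin K) (l : Fin (L k)), (⟨k, l⟩ : User L) ∉ S → d k l = 0) ∧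
  ∃ r : (k : Fin K) → Fin (L k) → ℝ,
    (∀ (k : Fin K) (l : Fin (L k)), (⟨k, l⟩ : User L) ∈ S → r k l ≤ 0) ∧
    (∀ (k : Fin K) (l : Fin (L k)), (⟨k, π k l⟩ : User L) ∈ S →
      d k (π k l) ≤ r k (π k l) + α k (π k l) k - innerMax L α π S r k l)

/-- The TIN-achievable region `P*_π` for decoding order `π`: as `P_π(𝒦)` but with the
positive part `max(0, ·)` of the upper bound. -/
def starTIN {K : ℕ} (L : Fin K → ℕ)
    (α : (k : Fin K) → Fin (L k) → Fin K → ℝ)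
    (π : (k : Fin K) → Equiv.Perm (Fin (L k)))
    (d : (k : Fin K) → Fin (L k) → ℝ) : Prop :=
  (∀ (k : Fin K) (l : Fin (L k)), 0 ≤ d k l) ∧
  ∃ r : (k : Fin K) → Fin (L k) → ℝ,
    (∀ (k : Fin K) (l : Fin (L k)), r k l ≤ 0) ∧
    (∀ (k : Fin K) (l : Fin (L k)),
      d k (π k l) ≤ max 0 (r k (π k l) + α k (π k l) k - innerMax L α π Set.univ r k l))

/-- The TIN cyclic system of GDoF inequalities for decoding order `π`:
(i) per-cell MAC-type bounds, and (ii) cyclic bounds over sequences of distinct cells. -/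
def cyclicSystem {K : ℕ} (L : Fin K → ℕ)
    (α : (k : Fin K) → Fin (L k) → Fin K → ℝ)
    (π : (k : Fin K) → Equiv.Perm (Fin (L k)))
    (d : (k : Fin K) → Fin (L k) → ℝ) : Prop :=
  (∀ (k : Fin K) (l : Fin (L k)),
      ∑ s ∈ Finset.Iic l, d k (π k s) ≤ α k (π k l) k) ∧
  (∀ m : ℕ, 2 ≤ m → m ≤ K → ∀ c : Fin m → Fin K, Function.Injective c →
    ∀ lsel : (j : Fin m) → Fin (L (c j)),
      ∑ j, (∑ s ∈ Finset.Iic (lsel j), d (c j) (π (c j) s)) ≤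
      ∑ j, (α (c j) (π (c j) (lsel j)) (c j) -
            α (c j) (π (c j) (lsel j)) (c (prevIdx j))))

/-!
Bubble sort on the decoding order of each cell. Suppose cell `k₀` decodes the stronger user
`a = π k₀ p` immediately before the weaker user `b = π k₀ q`, `p ⋖ q`. If `a` and `b` are
not both in `S`, swapping them only shrinks the set of users interfering with anyone in `S`.
Otherwise keep `d` and change the powers of `a` and `b` only: `a` takes over the received level
`r_b + α_b` of `b`, which by (C1) does not raise its level at any other receiver above that of
`b`, and `b` is received at level `M + d_b`, where `M` is the interference `a` used to see;
then `b` sees at most `M`, `a` at most `M + d_b`, and every other user of `S` at most its old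
interference. Each swap strictly increases `∑ i, i * π k i`, so finitely many reach the identity.
-/

theorem Equiv.swap_apply_lt_swap_apply_of_covBy {β : Type*} [LinearOrder β] {p q x y : β}
    (hpq : p ⋖ q) (hxy : x < y) (h : ¬(x = p ∧ y = q)) : swap p q x < swap p q y := by
  have hq : ∀ z, p < z → q ≤ z := fun z => hpq.ge_of_gt
  have hp : ∀ z, z < q → z ≤ p := fun z => hpq.le_of_lt
  have := hpq.lt
  rw [swap_apply_def, swap_apply_def]
  split_ifs <;> grind

theorem Equiv.Perm.exists_covBy_lt_of_ne_one {β : Type*} [LinearOrder β] [LocallyFiniteOrder β]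
    [Finite β] {σ : Equiv.Perm β} (hσ : σ ≠ 1) : ∃ p q, p ⋖ q ∧ σ q < σ p := by
  by_contra! h
  have hσmono : StrictMono σ := (strictMono_iff_forall_covBy σ).2 fun p q hpq =>
    (h p q hpq).lt_of_ne (σ.injective.ne hpq.ne)
  exact hσ (Equiv.ext (congrFun hσmono.eq_id))

theorem Equiv.Perm.sum_mul_lt_sum_mul_swap {n : ℕ} (σ : Equiv.Perm (Fin n)) {p q : Fin n}
    (hpq : p ⋖ q) (hσ : σ q < σ p) :
    ∑ x : Fin n, (x : ℕ) * σ x < ∑ x : Fin n, (x : ℕ) * (swap p q).trans σ x := by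
  classical
  have hq : (q : ℕ) = p + 1 := (Nat.covBy_iff_add_one_eq.1 (Fin.covBy_iff.1 hpq)).symm
  rw [← Finset.sum_add_sum_compl {p, q}, ← Finset.sum_add_sum_compl {p, q} (fun x => _ * _),
    Finset.sum_pair hpq.ne, Finset.sum_pair hpq.ne]
  refine add_lt_add_of_lt_of_le ?_ (Finset.sum_le_sum fun x hx => ?_)
  · simp only [Equiv.trans_apply, swap_apply_left, swap_apply_right, hq]
    have : ((σ q : Fin n) : ℕ) < σ p := hσ
    nlinarith
  · simp only [Finset.mem_compl, Finset.mem_insert, Finset.mem_singleton, not_or] at hx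
    simp [swap_apply_of_ne_of_ne hx.1 hx.2]

theorem Equiv.Perm.pi_induction_on_adjacent_inversion {ι : Type*} [Fintype ι] [DecidableEq ι]
    {n : ι → ℕ} {P : ((i : ι) → Equiv.Perm (Fin (n i))) → Prop}
    (step : ∀ π i (p q : Fin (n i)), p ⋖ q → π i q < π i p → P π →
      P (Function.update π i ((swap p q).trans (π i))))
    (π : (i : ι) → Equiv.Perm (Fin (n i))) (hπ : P π) : P 1 := by
  let weight : ((i : ι) → Equiv.Perm (Fin (n i))) → ℕ :=
    fun π => ∑ i, ∑ x : Fin (n i), (x : ℕ) * π i x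
  have hwf : WellFounded fun τ σ => weight σ < weight τ :=
    @Finite.wellFounded_of_trans_of_irrefl _ _ _ ⟨fun _ _ _ h₁ h₂ => h₂.trans h₁⟩
      ⟨fun _ => lt_irrefl _⟩
  induction π using hwf.induction with
  | _ π ih =>
    by_cases h1 : π = 1
    · exact h1 ▸ hπ
    obtain ⟨i, hi⟩ : ∃ i, π i ≠ 1 := by
      by_contra!
      exact h1 (funext this)
    obtain ⟨p, q, hpq, hinv⟩ := exists_covBy_lt_of_ne_one hi
    refine ih _ (Finset.sum_lt_sum (fun j _ => ?_) ⟨i, Finset.mem_univ _, ?_⟩)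
      (step π i p q hpq hinv hπ)
    · rcases eq_or_ne j i with rfl | hj
      · simpa using (sum_mul_lt_sum_mul_swap _ hpq hinv).le
      · simp [Function.update_of_ne hj]
    · simpa using sum_mul_lt_sum_mul_swap _ hpq hinv

theorem Function.exists_eq_except_pair {ι : Type*} [DecidableEq ι] {β : ι → Type*}
    [∀ i, DecidableEq (β i)] {γ : Type*} (f : (i : ι) → β i → γ) {i₀ : ι} {a b : β i₀}
    (hab : a ≠ b) (x y : γ) :
    ∃ g : (i : ι) → β i → γ, (∀ i ≠ i₀, g i = f i) ∧ (∀ u, u ≠ a → u ≠ b → g i₀ u = f i₀ u) ∧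
      g i₀ a = x ∧ g i₀ b = y :=
  ⟨update f i₀ (update (update (f i₀) a x) b y), fun i hi => update_of_ne hi _ _,
    fun u hua hub => by simp [hua, hub], by simp [hab], by simp⟩

section InnerMax

variable {K : ℕ} {L : Fin K → ℕ} {α : (k : Fin K) → Fin (L k) → Fin K → ℝ}
  {π : (k : Fin K) → Equiv.Perm (Fin (L k))} {S : Set (User L)}
  {r : (k : Fin K) → Fin (L k) → ℝ} {k : Fin K} {l : Fin (L k)}

theorem innerMax_le_iff {x : ℝ} :
    innerMax L α π S r k l ≤ x ↔ 0 ≤ x ∧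
      (∀ l' < l, (⟨k, π k l'⟩ : User L) ∈ S → r k (π k l') + α k (π k l') k ≤ x) ∧
      (∀ j (lj : Fin (L j)), j ≠ k → (⟨j, lj⟩ : User L) ∈ S → r j lj + α j lj k ≤ x) := by
  have hown : Set.Finite {x : ℝ | ∃ l' : Fin (L k), l' < l ∧ (⟨k, π k l'⟩ : User L) ∈ S ∧
      x = r k (π k l') + α k (π k l') k} :=
    (Set.finite_range fun l' => r k (π k l') + α k (π k l') k).subset
      (by rintro _ ⟨l', -, -, rfl⟩; exact ⟨l', rfl⟩)
  have hcross : Set.Finite {x : ℝ | ∃ (j : Fin K) (lj : Fin (L j)), j ≠ k ∧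
      (⟨j, lj⟩ : User L) ∈ S ∧ x = r j lj + α j lj k} :=
    (Set.finite_range fun u : User L => r u.1 u.2 + α u.1 u.2 k).subset
      (by rintro _ ⟨j, lj, -, -, rfl⟩; exact ⟨⟨j, lj⟩, rfl⟩)
  rw [innerMax, csSup_le_iff ((hown.union hcross).insert 0).bddAbove (Set.insert_nonempty _ _)]
  simp only [Set.forall_mem_insert, Set.mem_union, Set.mem_ofPred_eq, or_imp, forall_and]
  grind

theorem innerMax_nonneg : 0 ≤ innerMax L α π S r k l :=
  (innerMax_le_iff.1 le_rfl).1

theorem le_innerMax_of_lt {l' : Fin (L k)} (hl' : l' < l) (hS : (⟨k, π k l'⟩ : User L) ∈ S) :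
    r k (π k l') + α k (π k l') k ≤ innerMax L α π S r k l :=
  (innerMax_le_iff.1 le_rfl).2.1 l' hl' hS

theorem le_innerMax_of_ne {j : Fin K} {lj : Fin (L j)} (hj : j ≠ k)
    (hS : (⟨j, lj⟩ : User L) ∈ S) : r j lj + α j lj k ≤ innerMax L α π S r k l :=
  (innerMax_le_iff.1 le_rfl).2.2 j lj hj hS

theorem innerMax_le_innerMax {π' : (k : Fin K) → Equiv.Perm (Fin (L k))}
    {r' : (k : Fin K) → Fin (L k) → ℝ} {l' : Fin (L k)}
    (hown : ∀ l₁ < l', (⟨k, π' k l₁⟩ : User L) ∈ S → ∃ l₂ < l, (⟨k, π k l₂⟩ : User L) ∈ S ∧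
      r' k (π' k l₁) + α k (π' k l₁) k ≤ r k (π k l₂) + α k (π k l₂) k)
    (hcross : ∀ j (lj : Fin (L j)), j ≠ k → (⟨j, lj⟩ : User L) ∈ S →
      ∃ lj' : Fin (L j), (⟨j, lj'⟩ : User L) ∈ S ∧ r' j lj + α j lj k ≤ r j lj' + α j lj' k) :
    innerMax L α π' S r' k l' ≤ innerMax L α π S r k l := by
  refine innerMax_le_iff.2 ⟨innerMax_nonneg, fun l₁ hl₁ hS => ?_, fun j lj hj hS => ?_⟩
  · obtain ⟨l₂, hl₂, hS₂, hle⟩ := hown l₁ hl₁ hS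
    exact hle.trans (le_innerMax_of_lt hl₂ hS₂)
  · obtain ⟨lj', hS', hle⟩ := hcross j lj hj hS
    exact hle.trans (le_innerMax_of_ne hj hS')

theorem innerMax_mono : Monotone (innerMax L α π S r k) := fun _ _ hll' =>
  innerMax_le_innerMax (fun l₁ hl₁ hS => ⟨l₁, hl₁.trans_le hll', hS, le_rfl⟩)
    (fun _ lj _ hS => ⟨lj, hS, le_rfl⟩)

theorem innerMax_update_of_ne {k₀ : Fin K} (σ : Equiv.Perm (Fin (L k₀))) (hk : k ≠ k₀) :
    innerMax L α (Function.update π k₀ σ) S r k l = innerMax L α π S r k l := by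
  simp only [innerMax, Function.update_of_ne hk]

end InnerMax

section AdjacentSwap

variable {K : ℕ} {L : Fin K → ℕ} {α : (k : Fin K) → Fin (L k) → Fin K → ℝ}
  {π : (k : Fin K) → Equiv.Perm (Fin (L k))} {S : Set (User L)}
  {r r' d : (k : Fin K) → Fin (L k) → ℝ} {k₀ : Fin K} {p q : Fin (L k₀)}

theorem innerMax_update_swap_left_le (hpq : p ⋖ q) (hr'k : ∀ j ≠ k₀, r' j = r j)
    (hr'u : ∀ u, u ≠ π k₀ p → u ≠ π k₀ q → r' k₀ u = r k₀ u) :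
    innerMax L α (Function.update π k₀ ((Equiv.swap p q).trans (π k₀))) S r' k₀ p ≤
      innerMax L α π S r k₀ p := by
  refine innerMax_le_innerMax (fun l₁ hl₁ hS₁ => ⟨l₁, hl₁, ?_⟩)
    (fun j lj hj hS => ⟨lj, hS, by rw [hr'k j hj]⟩)
  have hl₁q := (hl₁.trans hpq.lt).ne
  simp only [Function.update_self, Equiv.trans_apply, Equiv.swap_apply_of_ne_of_ne hl₁.ne hl₁q]
    at hS₁ ⊢
  rw [hr'u _ ((π k₀).injective.ne hl₁.ne) ((π k₀).injective.ne hl₁q)]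
  exact ⟨hS₁, le_rfl⟩

theorem innerMax_update_swap_right_le (hpq : p ⋖ q) (hr'k : ∀ j ≠ k₀, r' j = r j)
    (hr'u : ∀ u, u ≠ π k₀ p → u ≠ π k₀ q → r' k₀ u = r k₀ u) :
    innerMax L α (Function.update π k₀ ((Equiv.swap p q).trans (π k₀))) S r' k₀ q ≤
      max (innerMax L α π S r k₀ p) (r' k₀ (π k₀ q) + α k₀ (π k₀ q) k₀) := by
  refine innerMax_le_iff.2 ⟨innerMax_nonneg.trans (le_max_left _ _), fun l₁ hl₁ hS₁ => ?_,
    fun j lj hj hS => ?_⟩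
  · rcases (hpq.le_of_lt hl₁).lt_or_eq with hl₁p | rfl
    · simp only [Function.update_self, Equiv.trans_apply,
        Equiv.swap_apply_of_ne_of_ne hl₁p.ne hl₁.ne] at hS₁ ⊢
      rw [hr'u _ ((π k₀).injective.ne hl₁p.ne) ((π k₀).injective.ne hl₁.ne)]
      exact (le_innerMax_of_lt hl₁p hS₁).trans (le_max_left _ _)
    · simp
  · rw [hr'k j hj]
    exact (le_innerMax_of_ne hj hS).trans (le_max_left _ _)

theorem innerMax_update_swap_le_of_ne_of_ne (hpq : p ⋖ q)
    (hr'k : ∀ j ≠ k₀, r' j = r j) (hr'u : ∀ u, u ≠ π k₀ p → u ≠ π k₀ q → r' k₀ u = r k₀ u)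
    (hb : (⟨k₀, π k₀ q⟩ : User L) ∈ S)
    (hra : r' k₀ (π k₀ p) + α k₀ (π k₀ p) k₀ ≤ r k₀ (π k₀ q) + α k₀ (π k₀ q) k₀)
    (hrb : r' k₀ (π k₀ q) ≤ r k₀ (π k₀ q)) {l : Fin (L k₀)} (hlp : l ≠ p) (hlq : l ≠ q) :
    innerMax L α (Function.update π k₀ ((Equiv.swap p q).trans (π k₀))) S r' k₀ l ≤
      innerMax L α π S r k₀ l := by
  refine innerMax_le_innerMax (fun l₁ hl₁ hS₁ => ?_)
    (fun j lj hj hS => ⟨lj, hS, by rw [hr'k j hj]⟩)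
  simp only [Function.update_self, Equiv.trans_apply] at hS₁ ⊢
  by_cases hl₁p : l₁ = p
  · subst hl₁p
    refine ⟨q, (hpq.ge_of_gt hl₁).lt_of_ne (Ne.symm hlq), hb, ?_⟩
    simpa using hrb
  by_cases hl₁q : l₁ = q
  · subst hl₁q
    exact ⟨l₁, hl₁, hb, by simpa using hra⟩
  · rw [Equiv.swap_apply_of_ne_of_ne hl₁p hl₁q] at hS₁ ⊢
    rw [hr'u _ ((π k₀).injective.ne hl₁p) ((π k₀).injective.ne hl₁q)]
    exact ⟨l₁, hl₁, hS₁, le_rfl⟩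

theorem innerMax_update_swap_le_of_cell_ne (hr'k : ∀ j ≠ k₀, r' j = r j)
    (hr'u : ∀ u, u ≠ π k₀ p → u ≠ π k₀ q → r' k₀ u = r k₀ u)
    (hb : (⟨k₀, π k₀ q⟩ : User L) ∈ S) {k : Fin K} (hk : k ≠ k₀)
    (hra : r' k₀ (π k₀ p) + α k₀ (π k₀ p) k ≤ r k₀ (π k₀ q) + α k₀ (π k₀ q) k)
    (hrb : r' k₀ (π k₀ q) ≤ r k₀ (π k₀ q)) (l : Fin (L k)) :
    innerMax L α (Function.update π k₀ ((Equiv.swap p q).trans (π k₀))) S r' k l ≤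
      innerMax L α π S r k l := by
  refine innerMax_le_innerMax (fun l₁ hl₁ hS₁ => ⟨l₁, hl₁, ?_⟩) (fun j lj hj hS => ?_)
  · simp only [Function.update_of_ne hk, hr'k k hk] at hS₁ ⊢
    exact ⟨hS₁, le_rfl⟩
  rcases eq_or_ne j k₀ with rfl | hj₀
  · by_cases hla : lj = π j p
    · exact ⟨π j q, hb, hla ▸ hra⟩
    by_cases hlb : lj = π j q
    · exact ⟨π j q, hb, by rw [hlb]; linarith⟩
    · exact ⟨lj, hS, by rw [hr'u lj hla hlb]⟩
  · exact ⟨lj, hS, by rw [hr'k j hj₀]⟩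

theorem polyTIN_update_swap_of_not_mem (hpq : p ⋖ q)
    (hS : ¬((⟨k₀, π k₀ p⟩ : User L) ∈ S ∧ (⟨k₀, π k₀ q⟩ : User L) ∈ S))
    (hd : polyTIN L α π S d) :
    polyTIN L α (Function.update π k₀ ((Equiv.swap p q).trans (π k₀))) S d := by
  obtain ⟨hd0, hdS, r, hr0, hr⟩ := hd
  refine ⟨hd0, hdS, r, hr0, fun k l hl => ?_⟩
  rcases eq_or_ne k k₀ with rfl | hk
  · have hle : innerMax L α (Function.update π k ((Equiv.swap p q).trans (π k))) S r k l ≤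
        innerMax L α π S r k (Equiv.swap p q l) := by
      refine innerMax_le_innerMax (fun l₁ hl₁ hS₁ => ?_) (fun _ lj _ hS => ⟨lj, hS, le_rfl⟩)
      simp only [Function.update_self, Equiv.trans_apply] at hl hS₁ ⊢
      refine ⟨Equiv.swap p q l₁, Equiv.swap_apply_lt_swap_apply_of_covBy hpq hl₁ ?_, hS₁, le_rfl⟩
      rintro ⟨rfl, rfl⟩
      simp_all
    simp only [Function.update_self, Equiv.trans_apply] at hl ⊢
    linarith [hr k _ hl]
  · simp only [Function.update_of_ne hk, innerMax_update_of_ne _ hk] at hl ⊢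
    exact hr k l hl

theorem polyTIN_update_swap_of_mem (hpq : p ⋖ q)
    (hmono : α k₀ (π k₀ q) k₀ ≤ α k₀ (π k₀ p) k₀)
    (hC1 : ∀ j ≠ k₀, α k₀ (π k₀ q) k₀ + α k₀ (π k₀ p) j - α k₀ (π k₀ q) j ≤ α k₀ (π k₀ p) k₀)
    (ha : (⟨k₀, π k₀ p⟩ : User L) ∈ S) (hb : (⟨k₀, π k₀ q⟩ : User L) ∈ S)
    (hd : polyTIN L α π S d) :
    polyTIN L α (Function.update π k₀ ((Equiv.swap p q).trans (π k₀))) S d := by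
  obtain ⟨hd0, hdS, r, hr0, hr⟩ := hd
  set M := innerMax L α π S r k₀ p
  have hMb : M + d k₀ (π k₀ q) ≤ r k₀ (π k₀ q) + α k₀ (π k₀ q) k₀ := by
    linarith [hr k₀ q hb, innerMax_mono (α := α) (π := π) (S := S) (r := r) hpq.le]
  obtain ⟨r', hr'k, hr'u, hr'a, hr'b⟩ := Function.exists_eq_except_pair r
    ((π k₀).injective.ne hpq.ne) (r k₀ (π k₀ q) + α k₀ (π k₀ q) k₀ - α k₀ (π k₀ p) k₀)
    (M + d k₀ (π k₀ q) - α k₀ (π k₀ q) k₀)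
  have hrb : r' k₀ (π k₀ q) ≤ r k₀ (π k₀ q) := by linarith
  refine ⟨hd0, hdS, r', fun k u hu => ?_, fun k l hl => ?_⟩
  · rcases eq_or_ne k k₀ with rfl | hk
    · by_cases hab : u = π k p ∨ u = π k q
      · rcases hab with rfl | rfl <;> linarith [hr0 _ _ hb]
      · push Not at hab
        exact (hr'u u hab.1 hab.2).trans_le (hr0 _ _ hu)
    · exact (congrFun (hr'k k hk) u).trans_le (hr0 k u hu)
  rcases eq_or_ne k k₀ with rfl | hk
  · by_cases hlp : l = p
    · subst hlp
      simp only [Function.update_self, Equiv.trans_apply, Equiv.swap_apply_left] at hl ⊢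
      linarith [innerMax_update_swap_left_le (α := α) (S := S) hpq hr'k hr'u]
    by_cases hlq : l = q
    · subst hlq
      simp only [Function.update_self, Equiv.trans_apply, Equiv.swap_apply_right] at hl ⊢
      have hle := innerMax_update_swap_right_le (α := α) (S := S) hpq hr'k hr'u
      rw [max_eq_right (by linarith [hd0 k (π k l)])] at hle
      linarith [hr k p ha, hr k l hb, le_innerMax_of_lt (α := α) (r := r) hpq.lt ha]
    · simp only [Function.update_self, Equiv.trans_apply, Equiv.swap_apply_of_ne_of_ne hlp hlq]
        at hl ⊢
      rw [hr'u _ ((π k).injective.ne hlp) ((π k).injective.ne hlq)]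
      linarith [hr k l hl, innerMax_update_swap_le_of_ne_of_ne (α := α) hpq hr'k hr'u hb
        (by linarith) hrb hlp hlq]
  · simp only [Function.update_of_ne hk] at hl ⊢
    rw [hr'k k hk]
    linarith [hr k l hl, innerMax_update_swap_le_of_cell_ne hr'k hr'u hb hk
      (by linarith [hC1 k hk]) hrb l]

end AdjacentSwap

theorem polyTIN_subset_polyTIN_id_general {K : ℕ}
    (L : Fin K → ℕ)
    (α : (k : Fin K) → Fin (L k) → Fin K → ℝ)
    (hmono : ∀ k : Fin K, Monotone (fun l : Fin (L k) => α k l k))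
    (hC1 : ∀ (i j : Fin K), j ≠ i → ∀ (l' l : Fin (L i)), l' < l →
      α i l' i + α i l j - α i l' j ≤ α i l i) :
    ∀ (S : Set (User L)) (π : (k : Fin K) → Equiv.Perm (Fin (L k))),
      {d : (k : Fin K) → Fin (L k) → ℝ | polyTIN L α π S d} ⊆
      {d : (k : Fin K) → Fin (L k) → ℝ | polyTIN L α (idOrder L) S d} := by
  intro S π d hd
  refine Equiv.Perm.pi_induction_on_adjacent_inversion (P := fun π => polyTIN L α π S d)
    (fun π k p q hpq hinv hπ => ?_) π hd
  by_cases hS : (⟨k, π k p⟩ : User L) ∈ S ∧ (⟨k, π k q⟩ : User L) ∈ S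
  · exact polyTIN_update_swap_of_mem hpq (hmono k hinv.le) (fun j hj => hC1 k j hj _ _ hinv)
      hS.1 hS.2 hπ
  · exact polyTIN_update_swap_of_not_mem hpq hS hπ

/-- **Step 1 of the convexity proof (dominance of the identity decoding order).**
Under the TIN-convexity condition (C1), for every subnetwork `S ⊆ 𝒦` and every decoding
order `π`, the polyhedral TIN region `P_π(S)` is contained in `P_id(S)`. -/
theorem polyTIN_subset_polyTIN_id {K : ℕ} (hK : 1 ≤ K)
    (L : Fin K → ℕ) (hL : ∀ k, 1 ≤ L k)
    (α : (k : Fin K) → Fin (L k) → Fin K → ℝ)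
    (hα : ∀ (k : Fin K) (l : Fin (L k)) (i : Fin K), 0 ≤ α k l i)
    (hmono : ∀ k : Fin K, Monotone (fun l : Fin (L k) => α k l k))
    (hC1 : ∀ (i j : Fin K), j ≠ i → ∀ (l' l : Fin (L i)), l' < l →
      α i l' i + α i l j - α i l' j ≤ α i l i) :
    ∀ (S : Set (User L)) (π : (k : Fin K) → Equiv.Perm (Fin (L k))),
      {d : (k : Fin K) → Fin (L k) → ℝ | polyTIN L α π S d} ⊆
      {d : (k : Fin K) → Fin (L k) → ℝ | polyTIN L α (idOrder L) S d} :=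
  polyTIN_subset_polyTIN_id_general L α hmono hC1
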